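/- Let n ≥ 4 and let A₁ ≥ A₂ ≥ … ≥ Aₙ > 0 be real numbers with A₁ < A₂ + … + Aₙ. Then there exist vectors v₁, …, vₙ in ℝ³ with ‖vᵢ‖ = Aᵢ, summing to zero, no two positively proportional, spanning ℝ³, and such that each vᵢ lies in the xy-plane (third coordinate zero) or in the yz-plane (first coordinate zero). -/

import Mathlib

/-!
Identify both coordinate planes with `ℂ`, the real axis going to their common `y`-axis. The two
longest vectors form a triangle with the real side `-s` in the `xy`-plane; the others lie in the
`yz`-plane and sum to `s`. There the vectors of lengths `A₅, …, Aₙ` get signs `±1`, chosen greedily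
so that `A₃`, `A₄` and `s - ∑ ±Aᵢ` are the sides of a nondegenerate triangle, and are rotated by the
distinct small angles `ε i`; the remaining gap is closed by a triangle on `A₃` and `A₄`. At `ε = 0`
the short vectors are real while the closing sides are not, so by continuity no two vectors are
parallel for small `ε > 0`.
-/

def PosProportional {V : Type*} [AddCommGroup V] [Module ℝ V] (u v : V) : Prop :=
  ∃ c : ℝ, 0 < c ∧ u = c • v

open Complex ComplexConjugate Filter Topology Real

theorem Complex.linearIndependent_pair_of_im_conj_mul_ne_zero {z w : ℂ}
    (h : (conj z * w).im ≠ 0) : LinearIndependent ℝ ![z, w] := by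
  rw [LinearIndependent.pair_iff]
  intro a b hab
  have hb : b * (conj z * w).im = 0 := by
    have := congrArg (fun u => (conj z * u).im) hab
    simp only [real_smul, mul_add, add_im, mul_zero, zero_im, mul_im, mul_re, conj_re, conj_im,
      ofReal_re, ofReal_im] at this ⊢
    linarith
  have hb0 : b = 0 := (mul_eq_zero.mp hb).resolve_right h
  subst hb0
  have hz : z ≠ 0 := by rintro rfl; simp at h
  simpa [hz] using hab

-- The apex in the upper half-plane of the triangle on the base `[0, 1]` with sides `p` at `0`
-- and `q` at `1`.
noncomputable def unitApex (p q : ℝ) : ℂ :=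
  ((1 + p ^ 2 - q ^ 2) / 2 : ℝ) + (√(p ^ 2 - ((1 + p ^ 2 - q ^ 2) / 2) ^ 2) : ℝ) * I

section unitApex
variable {p q : ℝ}

theorem unitApex_discr_pos (h₁ : |p - q| < 1) (h₂ : 1 < p + q) :
    0 < p ^ 2 - ((1 + p ^ 2 - q ^ 2) / 2) ^ 2 := by
  obtain ⟨h₃, h₄⟩ := abs_lt.mp h₁
  have : p ^ 2 - ((1 + p ^ 2 - q ^ 2) / 2) ^ 2
      = (p + q - 1) * (1 - p + q) * (1 + p - q) * (1 + p + q) / 4 := by ring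
  rw [this]
  refine div_pos ?_ four_pos
  exact mul_pos (mul_pos (mul_pos (by linarith) (by linarith)) (by linarith)) (by linarith)

theorem unitApex_im_pos (h₁ : |p - q| < 1) (h₂ : 1 < p + q) : 0 < (unitApex p q).im := by
  rw [unitApex, add_im, ofReal_im, mul_I_im, ofReal_re, zero_add]
  exact Real.sqrt_pos.mpr (unitApex_discr_pos h₁ h₂)

theorem norm_unitApex (h₁ : |p - q| < 1) (h₂ : 1 < p + q) : ‖unitApex p q‖ = p := by
  have hp : 0 ≤ p := by linarith [neg_abs_le (p - q)]
  rw [unitApex, Complex.norm_add_mul_I, Real.sq_sqrt (unitApex_discr_pos h₁ h₂).le,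
    add_sub_cancel, Real.sqrt_sq hp]

theorem norm_one_sub_unitApex (h₁ : |p - q| < 1) (h₂ : 1 < p + q) :
    ‖1 - unitApex p q‖ = q := by
  have hq : 0 ≤ q := by linarith [le_abs_self (p - q)]
  have : 1 - unitApex p q = ((1 - (1 + p ^ 2 - q ^ 2) / 2 : ℝ) : ℂ)
      + (-√(p ^ 2 - ((1 + p ^ 2 - q ^ 2) / 2) ^ 2) : ℝ) * I := by
    simp only [unitApex]; push_cast; ring
  rw [this, Complex.norm_add_mul_I, neg_sq, Real.sq_sqrt (unitApex_discr_pos h₁ h₂).le,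
    show (1 - (1 + p ^ 2 - q ^ 2) / 2) ^ 2 + (p ^ 2 - ((1 + p ^ 2 - q ^ 2) / 2) ^ 2) = q ^ 2 by
      ring,
    Real.sqrt_sq hq]

theorem continuous_unitApex : Continuous fun x : ℝ × ℝ => unitApex x.1 x.2 := by
  unfold unitApex
  fun_prop

end unitApex

noncomputable def triangleApex (b₁ b₂ : ℝ) (T : ℂ) : ℂ := T * unitApex (b₁ / ‖T‖) (b₂ / ‖T‖)

section triangleApex
variable {b₁ b₂ : ℝ} {T : ℂ}

theorem div_norm_triangle_inequalities (h₁ : |b₁ - b₂| < ‖T‖) (h₂ : ‖T‖ < b₁ + b₂) :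
    |b₁ / ‖T‖ - b₂ / ‖T‖| < 1 ∧ 1 < b₁ / ‖T‖ + b₂ / ‖T‖ := by
  have hT : 0 < ‖T‖ := (abs_nonneg _).trans_lt h₁
  rw [← sub_div, ← add_div, abs_div, abs_of_pos hT, div_lt_one hT, one_lt_div hT]
  exact ⟨h₁, h₂⟩

theorem norm_triangleApex (h₁ : |b₁ - b₂| < ‖T‖) (h₂ : ‖T‖ < b₁ + b₂) :
    ‖triangleApex b₁ b₂ T‖ = b₁ := by
  have hT : ‖T‖ ≠ 0 := ((abs_nonneg _).trans_lt h₁).ne'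
  obtain ⟨hp, hq⟩ := div_norm_triangle_inequalities h₁ h₂
  rw [triangleApex, norm_mul, norm_unitApex hp hq, mul_div_cancel₀ _ hT]

theorem norm_sub_triangleApex (h₁ : |b₁ - b₂| < ‖T‖) (h₂ : ‖T‖ < b₁ + b₂) :
    ‖T - triangleApex b₁ b₂ T‖ = b₂ := by
  have hT : ‖T‖ ≠ 0 := ((abs_nonneg _).trans_lt h₁).ne'
  obtain ⟨hp, hq⟩ := div_norm_triangle_inequalities h₁ h₂
  rw [triangleApex, ← mul_one_sub, norm_mul, norm_one_sub_unitApex hp hq, mul_div_cancel₀ _ hT]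

theorem im_conj_triangleApex_mul_sub_neg (h₁ : |b₁ - b₂| < ‖T‖) (h₂ : ‖T‖ < b₁ + b₂) :
    (conj (triangleApex b₁ b₂ T) * (T - triangleApex b₁ b₂ T)).im < 0 := by
  have hT : T ≠ 0 := norm_pos_iff.mp ((abs_nonneg _).trans_lt h₁)
  obtain ⟨hp, hq⟩ := div_norm_triangle_inequalities h₁ h₂
  set c := unitApex (b₁ / ‖T‖) (b₂ / ‖T‖)
  have : (conj (T * c) * (T - T * c)).im = -(normSq T * c.im) := by
    simp only [mul_im, mul_re, sub_re, sub_im, conj_re, conj_im, normSq_apply]; ring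
  rw [triangleApex, this, neg_lt_zero]
  exact mul_pos (normSq_pos.mpr hT) (unitApex_im_pos hp hq)

theorem linearIndependent_triangleApex (h₁ : |b₁ - b₂| < ‖T‖) (h₂ : ‖T‖ < b₁ + b₂) :
    LinearIndependent ℝ ![triangleApex b₁ b₂ T, T - triangleApex b₁ b₂ T] :=
  linearIndependent_pair_of_im_conj_mul_ne_zero (im_conj_triangleApex_mul_sub_neg h₁ h₂).ne

theorem triangleApex_ofReal_im_ne_zero {r : ℝ} (h₁ : |b₁ - b₂| < ‖(r : ℂ)‖)
    (h₂ : ‖(r : ℂ)‖ < b₁ + b₂) : (triangleApex b₁ b₂ r).im ≠ 0 := by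
  have hr : r ≠ 0 := by rintro rfl; simp at h₁; linarith [abs_nonneg (b₁ - b₂)]
  obtain ⟨hp, hq⟩ := div_norm_triangle_inequalities h₁ h₂
  rw [triangleApex, im_ofReal_mul]
  exact mul_ne_zero hr (unitApex_im_pos hp hq).ne'

theorem continuousAt_triangleApex (hT : T ≠ 0) : ContinuousAt (triangleApex b₁ b₂) T := by
  have hT' : ‖T‖ ≠ 0 := norm_ne_zero_iff.mpr hT
  have : ContinuousAt (fun T : ℂ => (b₁ / ‖T‖, b₂ / ‖T‖)) T :=
    (continuousAt_const.div continuous_norm.continuousAt hT').prodMk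
      (continuousAt_const.div continuous_norm.continuousAt hT')
  exact continuousAt_id.mul
    (continuous_unitApex.continuousAt.comp (f := fun T : ℂ => (b₁ / ‖T‖, b₂ / ‖T‖)) this)

end triangleApex

theorem exists_signs_abs_sub_sum_lt {ι : Type*} (s : Finset ι) (d : ι → ℝ) {c x : ℝ}
    (hd : ∀ i ∈ s, 0 ≤ d i ∧ d i < c) (hx : |x| < c + ∑ i ∈ s, d i) :
    ∃ σ : ι → ℝ, (∀ i, |σ i| = 1) ∧ |x - ∑ i ∈ s, σ i * d i| < c := by
  classical
  induction s using Finset.induction_on generalizing x with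
  | empty => exact ⟨fun _ => 1, by simp, by simpa using hx⟩
  | insert a s ha ih =>
    rw [Finset.sum_insert ha] at hx
    obtain ⟨-, hdc⟩ := hd a (Finset.mem_insert_self a s)
    have hs : 0 ≤ ∑ i ∈ s, d i :=
      Finset.sum_nonneg fun i hi => (hd i (Finset.mem_insert_of_mem hi)).1
    obtain ⟨ε, hε, hxε⟩ : ∃ ε : ℝ, |ε| = 1 ∧ |x - ε * d a| < c + ∑ i ∈ s, d i := by
      obtain ⟨hx₁, hx₂⟩ := abs_lt.mp hx
      rcases le_or_gt 0 x with h | h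
      · exact ⟨1, abs_one, abs_lt.mpr ⟨by linarith, by linarith⟩⟩
      · exact ⟨-1, by simp, abs_lt.mpr ⟨by linarith, by linarith⟩⟩
    obtain ⟨σ, hσ, hlt⟩ := ih (fun i hi => hd i (Finset.mem_insert_of_mem hi)) hxε
    refine ⟨Function.update σ a ε, fun i => ?_, ?_⟩
    · rcases eq_or_ne i a with rfl | h
      · rwa [Function.update_self]
      · rw [Function.update_of_ne h, hσ]
    · rw [Finset.sum_insert ha, Function.update_self,
        Finset.sum_congr rfl fun i hi => by
          rw [Function.update_of_ne (ne_of_mem_of_not_mem hi ha)]]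
      rwa [← sub_sub]

theorem Fin.pairwise_cons {α : Type*} {R : α → α → Prop} (hR : ∀ x y, R x y → R y x) {n : ℕ}
    {a : α} {f : Fin n → α} (ha : ∀ i, R a (f i)) (hf : Pairwise fun i j => R (f i) (f j)) :
    Pairwise fun i j =>
      R ((Fin.cons a f : Fin (n + 1) → α) i) ((Fin.cons a f : Fin (n + 1) → α) j) := by
  intro i j hij
  induction i using Fin.cases with
  | zero =>
    induction j using Fin.cases with
    | zero => exact absurd rfl hij
    | succ j => exact ha j
  | succ i =>
    induction j using Fin.cases with
    | zero => exact hR _ _ (ha i)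
    | succ j => exact hf fun h => hij (congrArg _ h)

theorem Complex.im_conj_ofReal_mul_exp_mul (a b x y : ℝ) :
    (conj (a * exp (x * I)) * (b * exp (y * I))).im = a * b * Real.sin (y - x) := by
  have : conj (a * exp (x * I)) * (b * exp (y * I))
      = ((a * b : ℝ) : ℂ) * exp ((y - x : ℝ) * I) := by
    rw [map_mul, conj_ofReal, ← exp_conj, map_mul, conj_ofReal, conj_I, ofReal_sub, sub_mul,
      sub_eq_neg_add, exp_add, ofReal_mul]
    ring_nf
  rw [this, im_ofReal_mul, exp_ofReal_mul_I_im]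

noncomputable def fan {m : ℕ} (c : Fin m → ℝ) (ε : ℝ) (k : Fin m) : ℂ :=
  c k * exp ((ε * k : ℝ) * I)

section fan
variable {m : ℕ} (c : Fin m → ℝ)

theorem norm_fan (ε : ℝ) (k : Fin m) : ‖fan c ε k‖ = |c k| := by
  rw [fan, norm_mul, norm_exp_ofReal_mul_I, mul_one, norm_real, Real.norm_eq_abs]

theorem fan_zero (k : Fin m) : fan c 0 k = c k := by simp [fan]

theorem continuous_fan (k : Fin m) : Continuous fun ε => fan c ε k := by
  unfold fan; fun_prop

theorem linearIndependent_fan (hc : ∀ k, c k ≠ 0) {ε : ℝ}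
    (hε : ε ∈ Set.Ioo 0 (π / ((m : ℝ) + 1))) {k l : Fin m} (hkl : k ≠ l) :
    LinearIndependent ℝ ![fan c ε k, fan c ε l] := by
  apply linearIndependent_pair_of_im_conj_mul_ne_zero
  rw [fan, fan, im_conj_ofReal_mul_exp_mul, ← mul_sub]
  refine mul_ne_zero (mul_ne_zero (hc k) (hc l)) fun h => ?_
  obtain ⟨hε₀, hε₁⟩ := hε
  have hπ : ε * (m + 1) < π := (lt_div_iff₀ (by positivity)).mp hε₁
  have hk : (k : ℝ) < m := by exact_mod_cast k.isLt
  have hl : (l : ℝ) < m := by exact_mod_cast l.isLt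
  rw [Real.sin_eq_zero_iff_of_lt_of_lt (by nlinarith [k.val.cast_nonneg (α := ℝ)])
    (by nlinarith [l.val.cast_nonneg (α := ℝ)])] at h
  have : (l : ℝ) = k := by
    have := (mul_eq_zero.mp h).resolve_left hε₀.ne'
    linarith
  exact hkl (Fin.ext (by exact_mod_cast this.symm))

end fan

theorem Complex.eventually_linearIndependent_of_tendsto {X : Type*} {l : Filter X}
    {p q : X → ℂ} {w : ℂ} {x : ℝ} (hp : Tendsto p l (𝓝 w)) (hq : Tendsto q l (𝓝 x)) (hw : w.im ≠ 0)
    (hx : x ≠ 0) : ∀ᶠ e in l, LinearIndependent ℝ ![p e, q e] := by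
  have hlim : Tendsto (fun e => (conj (p e) * q e).im) l (𝓝 (conj w * x).im) :=
    (continuous_im.tendsto _).comp (((continuous_conj.tendsto w).comp hp).mul hq)
  have hne : (conj w * x).im ≠ 0 := by
    simpa [mul_comm] using mul_ne_zero hw hx
  exact (hlim.eventually_ne hne).mono fun e => linearIndependent_pair_of_im_conj_mul_ne_zero

theorem eventually_triangleApex_linearIndependent {X κ : Type*} [Finite κ] {l : Filter X}
    {b₁ b₂ : ℝ} {T : X → ℂ} {u : κ → X → ℂ} {x : ℝ} {y : κ → ℝ} (hT : Tendsto T l (𝓝 x))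
    (hu : ∀ k, Tendsto (u k) l (𝓝 (y k))) (hy : ∀ k, y k ≠ 0) (h₁ : |b₁ - b₂| < x)
    (h₂ : x < b₁ + b₂) :
    ∀ᶠ e in l, (|b₁ - b₂| < ‖T e‖ ∧ ‖T e‖ < b₁ + b₂) ∧
      ∀ k, LinearIndependent ℝ ![triangleApex b₁ b₂ (T e), u k e] ∧
        LinearIndependent ℝ ![T e - triangleApex b₁ b₂ (T e), u k e] := by
  have hx : ‖(x : ℂ)‖ = x := by
    rw [norm_real, Real.norm_eq_abs, abs_of_pos ((abs_nonneg _).trans_lt h₁)]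
  have h₁' : |b₁ - b₂| < ‖(x : ℂ)‖ := by rwa [hx]
  have h₂' : ‖(x : ℂ)‖ < b₁ + b₂ := by rwa [hx]
  have hxne : (x : ℂ) ≠ 0 := norm_pos_iff.mp ((abs_nonneg _).trans_lt h₁')
  have hA : Tendsto (fun e => triangleApex b₁ b₂ (T e)) l (𝓝 (triangleApex b₁ b₂ x)) :=
    (continuousAt_triangleApex hxne).tendsto.comp hT
  have him : (triangleApex b₁ b₂ x).im ≠ 0 :=
    triangleApex_ofReal_im_ne_zero h₁' h₂'
  refine ((hT.norm.eventually_const_lt h₁').and (hT.norm.eventually_lt_const h₂')).and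
    (eventually_all.mpr fun k => ?_)
  refine (eventually_linearIndependent_of_tendsto hA (hu k) him (hy k)).and
    (eventually_linearIndependent_of_tendsto (hT.sub hA) (hu k) ?_ (hy k))
  simpa using him

theorem exists_polygon_pairwise_linearIndependent {m : ℕ} (r : Fin (m + 2) → ℝ)
    (hr : ∀ k : Fin m, 0 < r k.succ.succ) (σ : Fin m → ℝ) (hσ : ∀ k, |σ k| = 1) (t : ℝ)
    (h₁ : |r 0 - r 1| < t - ∑ k, σ k * r k.succ.succ)
    (h₂ : t - ∑ k, σ k * r k.succ.succ < r 0 + r 1) :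
    ∃ W : Fin (m + 2) → ℂ, (∀ i, ‖W i‖ = r i) ∧ ∑ i, W i = t ∧
      Pairwise fun i j => LinearIndependent ℝ ![W i, W j] := by
  set c : Fin m → ℝ := fun k => σ k * r k.succ.succ
  have hc : ∀ k, |c k| = r k.succ.succ := fun k => by
    rw [abs_mul, hσ, one_mul, abs_of_pos (hr k)]
  have hc₀ : ∀ k, c k ≠ 0 := fun k => abs_pos.mp (hc k ▸ hr k)
  have hu : ∀ k, Tendsto (fun ε => fan c ε k) (𝓝[>] 0) (𝓝 (c k)) := fun k =>
    fan_zero c k ▸ ((continuous_fan c k).tendsto 0).mono_left nhdsWithin_le_nhds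
  have hT : Tendsto (fun ε => (t : ℂ) - ∑ k, fan c ε k) (𝓝[>] 0)
      (𝓝 ((t - ∑ k, c k : ℝ) : ℂ)) := by
    push_cast
    exact tendsto_const_nhds.sub (tendsto_finsetSum _ fun k _ => hu k)
  obtain ⟨ε, ⟨hwin, hind⟩, hε⟩ :=
    ((eventually_triangleApex_linearIndependent hT hu hc₀ h₁ h₂).and
      (Ioo_mem_nhdsGT (by positivity : (0 : ℝ) < π / ((m : ℝ) + 1)))).exists
  set T := (t : ℂ) - ∑ k, fan c ε k
  refine ⟨Fin.cons (triangleApex (r 0) (r 1) T) (Fin.cons (T - triangleApex (r 0) (r 1) T)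
    (fan c ε)), fun i => ?_, ?_, ?_⟩
  · refine Fin.cases (norm_triangleApex hwin.1 hwin.2) (fun i => Fin.cases
      (norm_sub_triangleApex hwin.1 hwin.2) (fun k => ?_) i) i
    simp only [Fin.cons_succ, norm_fan, hc]
  · simp only [Fin.sum_cons, T]; ring
  · have hsymm : ∀ x y : ℂ, LinearIndependent ℝ ![x, y] → LinearIndependent ℝ ![y, x] :=
      fun _ _ => LinearIndependent.pair_symm_iff.mp
    refine Fin.pairwise_cons hsymm (Fin.cases (linearIndependent_triangleApex hwin.1 hwin.2)
      fun k => (hind k).1) (Fin.pairwise_cons hsymm (fun k => (hind k).2)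
        fun k l hkl => linearIndependent_fan c hc₀ hε hkl)

theorem LinearIndependent.not_posProportional {V : Type*} [AddCommGroup V] [Module ℝ V]
    {u v : V} (h : LinearIndependent ℝ ![u, v]) : ¬ PosProportional u v := by
  rintro ⟨c, -, rfl⟩
  exact one_ne_zero (LinearIndependent.pair_iff.mp h 1 (-c) (by
    rw [one_smul, neg_smul, add_neg_cancel])).1

-- Both planes are parametrised by `ℂ`, the real axis going to their common `y`-axis.
noncomputable def xyPlane : ℂ →ₗᵢ[ℝ] EuclideanSpace ℝ (Fin 3) where
  toFun z := !₂[z.im, z.re, 0]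
  map_add' z w := by ext i; fin_cases i <;> simp
  map_smul' c z := by ext i; fin_cases i <;> simp
  norm_map' z := by
    simp [EuclideanSpace.norm_eq, Fin.sum_univ_three, Complex.norm_eq_sqrt_sq_add_sq, add_comm]

noncomputable def yzPlane : ℂ →ₗᵢ[ℝ] EuclideanSpace ℝ (Fin 3) where
  toFun z := !₂[0, z.re, z.im]
  map_add' z w := by ext i; fin_cases i <;> simp
  map_smul' c z := by ext i; fin_cases i <;> simp
  norm_map' z := by
    simp [EuclideanSpace.norm_eq, Fin.sum_univ_three, Complex.norm_eq_sqrt_sq_add_sq]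

@[simp] theorem xyPlane_apply_zero (z : ℂ) : xyPlane z 0 = z.im := rfl
@[simp] theorem xyPlane_apply_one (z : ℂ) : xyPlane z 1 = z.re := rfl
@[simp] theorem xyPlane_apply_two (z : ℂ) : xyPlane z 2 = 0 := rfl
@[simp] theorem yzPlane_apply_zero (z : ℂ) : yzPlane z 0 = 0 := rfl
@[simp] theorem yzPlane_apply_one (z : ℂ) : yzPlane z 1 = z.re := rfl
@[simp] theorem yzPlane_apply_two (z : ℂ) : yzPlane z 2 = z.im := rfl

theorem xyPlane_ofReal (x : ℝ) : xyPlane x = yzPlane x := by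
  ext i; fin_cases i <;> simp

theorem LinearIndependent.map_linearIsometry {E F : Type*} [NormedAddCommGroup E]
    [NormedSpace ℝ E] [NormedAddCommGroup F] [NormedSpace ℝ F] (f : E →ₗᵢ[ℝ] F) {x y : E}
    (h : LinearIndependent ℝ ![x, y]) : LinearIndependent ℝ ![f x, f y] := by
  have e : f.toLinearMap ∘ ![x, y] = ![f x, f y] := by funext i; fin_cases i <;> rfl
  exact e ▸ h.map' f.toLinearMap (LinearMap.ker_eq_bot_of_injective f.injective)

theorem linearIndependent_xyPlane_yzPlane {z w : ℂ} (hz : z.im ≠ 0) (hw : w ≠ 0) :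
    LinearIndependent ℝ ![xyPlane z, yzPlane w] := by
  rw [LinearIndependent.pair_iff]
  intro a b hab
  have ha : a = 0 := by
    have := congrArg (· 0) hab
    simp only [PiLp.add_apply, PiLp.smul_apply, smul_eq_mul, xyPlane_apply_zero,
      yzPlane_apply_zero, mul_zero, add_zero, PiLp.zero_apply] at this
    exact (mul_eq_zero.mp this).resolve_right hz
  subst ha
  refine ⟨rfl, ?_⟩
  rw [zero_smul, zero_add, smul_eq_zero] at hab
  exact hab.resolve_right fun h => hw (yzPlane.injective (h.trans (map_zero _).symm))

theorem eq_top_of_xyPlane_mem_of_yzPlane_mem {S : Submodule ℝ (EuclideanSpace ℝ (Fin 3))}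
    {z w₁ w₂ : ℂ} (hz : z.im ≠ 0) (hw : LinearIndependent ℝ ![w₁, w₂]) (hzS : xyPlane z ∈ S)
    (hw₁ : yzPlane w₁ ∈ S) (hw₂ : yzPlane w₂ ∈ S) : S = ⊤ := by
  have hspan : Submodule.span ℝ (Set.range ![w₁, w₂]) = ⊤ :=
    hw.span_eq_top_of_card_eq_finrank (by simp)
  have hyz : ∀ c, yzPlane c ∈ S := by
    intro c
    have hc := Submodule.mem_map_of_mem (f := yzPlane.toLinearMap)
      (hspan ▸ Submodule.mem_top : c ∈ Submodule.span ℝ (Set.range ![w₁, w₂]))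
    rw [Submodule.map_span] at hc
    refine Submodule.span_le.mpr ?_ hc
    rintro _ ⟨_, ⟨i, rfl⟩, rfl⟩
    fin_cases i
    exacts [hw₁, hw₂]
  refine eq_top_iff.mpr fun u _ => ?_
  have hu : u = (u 0 / z.im) • xyPlane z + yzPlane ⟨u 1 - u 0 / z.im * z.re, u 2⟩ := by
    ext i; fin_cases i <;> simp [div_mul_cancel₀ _ hz]
  rw [hu]
  exact S.add_mem (S.smul_mem _ hzS) (hyz _)

theorem Complex.im_ne_zero_of_linearIndependent_of_add_eq_ofReal {z w : ℂ} {x : ℝ}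
    (h : LinearIndependent ℝ ![z, w]) (hzw : z + w = x) : z.im ≠ 0 := by
  intro hz
  have hw : w.im = 0 := by simpa [hz] using congrArg im hzw
  obtain ⟨-, hz₀⟩ := LinearIndependent.pair_iff.mp h w.re (-z.re) (by
    apply Complex.ext <;> simp [hz, hw]; ring)
  exact h.ne_zero 0 (Complex.ext (by simpa using hz₀) hz)

theorem exists_twoPlane_family {m : ℕ} (A : Fin (m + 4) → ℝ) (hA : ∀ i, 0 < A i) (s : ℝ)
    {z₀ z₁ : ℂ} {W : Fin (m + 2) → ℂ} (hz₀ : ‖z₀‖ = A 0) (hz₁ : ‖z₁‖ = A 1)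
    (hW : ∀ j, ‖W j‖ = A j.succ.succ) (hzs : z₀ + z₁ = -s) (hWs : ∑ j, W j = s)
    (hz : LinearIndependent ℝ ![z₀, z₁])
    (hWi : Pairwise fun i j => LinearIndependent ℝ ![W i, W j]) :
    ∃ v : Fin (m + 4) → EuclideanSpace ℝ (Fin 3),
      (∀ i, ‖v i‖ = A i) ∧
      (∑ i, v i) = 0 ∧
      (∀ i j, i ≠ j → ¬ PosProportional (v i) (v j)) ∧
      Submodule.span ℝ (Set.range v) = ⊤ ∧
      (∀ i, v i 2 = 0 ∨ v i 0 = 0) := by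
  have him₀ : z₀.im ≠ 0 :=
    im_ne_zero_of_linearIndependent_of_add_eq_ofReal hz (x := -s) (by simpa using hzs)
  have him₁ : z₁.im ≠ 0 := im_ne_zero_of_linearIndependent_of_add_eq_ofReal
    (LinearIndependent.pair_symm_iff.mp hz) (x := -s) (by rw [add_comm]; simpa using hzs)
  have hW₀ : ∀ j, W j ≠ 0 := fun j => norm_pos_iff.mp ((hW j).symm ▸ hA _)
  have hsymm : ∀ x y : EuclideanSpace ℝ (Fin 3), LinearIndependent ℝ ![x, y] →
      LinearIndependent ℝ ![y, x] := fun _ _ => LinearIndependent.pair_symm_iff.mp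
  let v : Fin (m + 4) → EuclideanSpace ℝ (Fin 3) :=
    Fin.cons (xyPlane z₀) (Fin.cons (xyPlane z₁) fun j => yzPlane (W j))
  have hv : Pairwise fun i j => LinearIndependent ℝ ![v i, v j] :=
    Fin.pairwise_cons hsymm
      (Fin.cases (hz.map_linearIsometry xyPlane) fun j =>
        linearIndependent_xyPlane_yzPlane him₀ (hW₀ j))
      (Fin.pairwise_cons hsymm (fun j => linearIndependent_xyPlane_yzPlane him₁ (hW₀ j))
        fun i j hij => (hWi hij).map_linearIsometry yzPlane)
  refine ⟨v, fun i => ?_, ?_, fun i j hij => (hv hij).not_posProportional, ?_, fun i => ?_⟩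
  · refine Fin.cases ?_ (fun i => Fin.cases ?_ (fun j => ?_) i) i <;>
      simp [v, hz₀, hz₁, hW]
  · simp only [v, Fin.sum_cons, ← map_sum, ← add_assoc, ← map_add, hzs, hWs, map_neg,
      xyPlane_ofReal, neg_add_cancel]
  · exact eq_top_of_xyPlane_mem_of_yzPlane_mem him₀ (hWi Fin.zero_ne_one)
      (Submodule.subset_span ⟨0, rfl⟩)
      (Submodule.subset_span ⟨(0 : Fin (m + 2)).succ.succ, rfl⟩)
      (Submodule.subset_span ⟨(1 : Fin (m + 2)).succ.succ, rfl⟩)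
  · exact Fin.cases (Or.inl rfl) (fun i => Fin.cases (Or.inl rfl) (fun j => Or.inr rfl) i) i

theorem exists_common_triangle_side {a₀ a₁ b₀ b₁ S : ℝ} (ha : a₁ ≤ a₀) (hb : b₁ ≤ b₀)
    (ha₁ : 0 < a₁) (hb₁ : 0 < b₁) (h : |a₀ - b₀ - S| < a₁ + b₁) :
    ∃ s, |a₀ - a₁| < s ∧ s < a₀ + a₁ ∧ |b₀ - b₁| < s - S ∧ s - S < b₀ + b₁ := by
  rw [abs_of_nonneg (sub_nonneg.mpr ha), abs_of_nonneg (sub_nonneg.mpr hb)]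
  obtain ⟨h₁, h₂⟩ := abs_lt.mp h
  obtain ⟨s, hl, hu⟩ := exists_between (max_lt (lt_min (by linarith) (by linarith))
    (lt_min (by linarith) (by linarith)) :
      max (a₀ - a₁) (b₀ - b₁ + S) < min (a₀ + a₁) (b₀ + b₁ + S))
  rw [max_lt_iff] at hl
  rw [lt_min_iff] at hu
  exact ⟨s, hl.1, hu.1, by linarith, by linarith⟩

/-- Given `n ≥ 4` reals `A₁ ≥ ⋯ ≥ Aₙ > 0` with `A₁ < A₂ + ⋯ + Aₙ`, there is a
fully equilibrated family in `ℝ³` with these norms such that every vector lies in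
the `xy`-plane (third coordinate zero) or in the `yz`-plane (first coordinate zero). -/
theorem exists_fully_equilibrated_in_two_planes (n : ℕ) (hn : 4 ≤ n) (A : Fin n → ℝ)
    (hpos : ∀ i, 0 < A i) (hsorted : Antitone A)
    (hlt : A ⟨0, by omega⟩ < ∑ i ∈ Finset.univ.erase ⟨0, by omega⟩, A i) :
    ∃ v : Fin n → EuclideanSpace ℝ (Fin 3),
      (∀ i, ‖v i‖ = A i) ∧
      (∑ i, v i) = 0 ∧
      (∀ i j, i ≠ j → ¬ PosProportional (v i) (v j)) ∧
      Submodule.span ℝ (Set.range v) = ⊤ ∧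
      (∀ i, v i 2 = 0 ∨ v i 0 = 0) := by
  obtain ⟨m, rfl⟩ : ∃ m, n = m + 4 := ⟨n - 4, by omega⟩
  have hle : ∀ {i j : ℕ} (hi : i < m + 4) (hj : j < m + 4), i ≤ j → A ⟨j, hj⟩ ≤ A ⟨i, hi⟩ :=
    fun hi hj hij => hsorted (Fin.mk_le_mk.mpr hij)
  set d : Fin m → ℝ := fun k => A k.succ.succ.succ.succ
  have hd : ∀ k, d k ≤ A 3 := fun k => hle (i := 3) (j := k + 4) (by omega) (by omega) (by omega)
  have h01 : A 1 ≤ A 0 := hle (i := 0) (j := 1) (by omega) (by omega) (by omega)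
  have h02 : A 2 ≤ A 0 := hle (i := 0) (j := 2) (by omega) (by omega) (by omega)
  have h23 : A 3 ≤ A 2 := hle (i := 2) (j := 3) (by omega) (by omega) (by omega)
  have hlt' : A 0 - A 2 < A 1 + A 3 + ∑ k, d k := by
    rw [Finset.sum_erase_eq_sub (Finset.mem_univ _), Fin.sum_univ_succ, Fin.sum_univ_succ,
      Fin.sum_univ_succ, Fin.sum_univ_succ] at hlt
    change A 0 < A 0 + (A 1 + (A 2 + (A 3 + ∑ k, d k))) - A 0 at hlt
    linarith
  obtain ⟨σ, hσ, hS⟩ := exists_signs_abs_sub_sum_lt Finset.univ d (c := A 1 + A 3)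
    (fun k _ => ⟨(hpos _).le, by linarith [hd k, hpos 1]⟩)
    (by rwa [abs_of_nonneg (sub_nonneg.mpr h02)])
  obtain ⟨s, hs₁, hs₂, hs₃, hs₄⟩ := exists_common_triangle_side h01 h23 (hpos 1) (hpos 3) hS
  obtain ⟨W, hWn, hWs, hWi⟩ := exists_polygon_pairwise_linearIndependent (fun j => A j.succ.succ)
    (fun k => hpos _) σ hσ s hs₃ hs₄
  have hs : ‖-(s : ℂ)‖ = s := by
    rw [norm_neg, norm_real, Real.norm_eq_abs, abs_of_pos ((abs_nonneg _).trans_lt hs₁)]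
  rw [← hs] at hs₁ hs₂
  exact exists_twoPlane_family A hpos s (norm_triangleApex hs₁ hs₂)
    (norm_sub_triangleApex hs₁ hs₂) hWn (add_sub_cancel _ _) hWs
    (linearIndependent_triangleApex hs₁ hs₂) hWi
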